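/- arXiv:1002.0986 — 6 statements merged into one kernel-verified Lean document; each statement's English description precedes it below -/
import Mathlib

section
/- Suppose the set [ν] is partitioned into s blocks. Independently colour each element yellow with probability c and, independently, blue with probability c. Then the probability that no block is bicoloured is at most [(1-c)^{ν/s}·(2-(1-c)^{ν/s})]^s. -/
/-!
With `q = 1 - c`, the two colourings restricted to different blocks are independent, and a block of
size `n` fails to be bicoloured with probability `q ^ n * (2 - q ^ n)` (one of the two colours misses
it entirely). So the probability is exactly `∏ j, a j * (2 - a j)` with `a j = q ^ n j` and
`∏ j, a j = q ^ ν`. AM–GM applied to the numbers `2 - a j`, followed by AM–GM for the `a j`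
themselves, bounds `∏ j, (2 - a j)` by `(2 - q ^ (ν / s)) ^ s`.
-/

open scoped Classical

/-- Probability weight of a subset `S` under a Bernoulli(c) process on `Fin ν`. -/
noncomputable def bernWeight (ν : ℕ) (c : ℝ) (S : Finset (Fin ν)) : ℝ :=
  c ^ S.card * (1 - c) ^ (ν - S.card)

open Finset

section AMGM

variable {ι : Type*}

lemma prod_rpow_inv_card_le_mean (s : Finset ι) (hs : s.Nonempty) (z : ι → ℝ)
    (hz : ∀ i ∈ s, 0 ≤ z i) : (∏ i ∈ s, z i) ^ (#s : ℝ)⁻¹ ≤ (∑ i ∈ s, z i) / #s := by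
  have hcard : (#s : ℝ) ≠ 0 := by exact_mod_cast hs.card_pos.ne'
  have hw : ∑ _i ∈ s, (#s : ℝ)⁻¹ = 1 := by simp [hcard]
  have := Real.geom_mean_le_arith_mean_weighted s (fun _ => (#s : ℝ)⁻¹) z
    (fun _ _ => by positivity) hw hz
  rwa [Real.finsetProd_rpow s z hz, ← mul_sum, inv_mul_eq_div] at this

lemma prod_two_sub_le (s : Finset ι) (a : ι → ℝ) (ha0 : ∀ i ∈ s, 0 ≤ a i)
    (ha2 : ∀ i ∈ s, a i ≤ 2) :
    ∏ i ∈ s, (2 - a i) ≤ (2 - (∏ i ∈ s, a i) ^ (#s : ℝ)⁻¹) ^ #s := by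
  rcases s.eq_empty_or_nonempty with rfl | hs
  · simp
  have hcard : (#s : ℝ) ≠ 0 := by exact_mod_cast hs.card_pos.ne'
  have hb0 : ∀ i ∈ s, 0 ≤ 2 - a i := fun i hi => sub_nonneg.2 (ha2 i hi)
  have hmean : (∑ i ∈ s, (2 - a i)) / #s = 2 - (∑ i ∈ s, a i) / #s := by
    rw [sum_sub_distrib, sum_const, nsmul_eq_mul]
    field_simp
  have hroot : (∏ i ∈ s, (2 - a i)) ^ (#s : ℝ)⁻¹ ≤ 2 - (∏ i ∈ s, a i) ^ (#s : ℝ)⁻¹ :=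
    calc (∏ i ∈ s, (2 - a i)) ^ (#s : ℝ)⁻¹ ≤ (∑ i ∈ s, (2 - a i)) / #s :=
          prod_rpow_inv_card_le_mean s hs _ hb0
      _ = 2 - (∑ i ∈ s, a i) / #s := hmean
      _ ≤ 2 - (∏ i ∈ s, a i) ^ (#s : ℝ)⁻¹ := by
          gcongr; exact prod_rpow_inv_card_le_mean s hs a ha0
  calc ∏ i ∈ s, (2 - a i) = ((∏ i ∈ s, (2 - a i)) ^ (#s : ℝ)⁻¹) ^ #s :=
        (Real.rpow_inv_natCast_pow (prod_nonneg hb0) hs.card_pos.ne').symm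
    _ ≤ (2 - (∏ i ∈ s, a i) ^ (#s : ℝ)⁻¹) ^ #s :=
        pow_le_pow_left₀ (Real.rpow_nonneg (prod_nonneg hb0) _) hroot _

lemma prod_mul_two_sub_le (s : Finset ι) (a : ι → ℝ) (ha0 : ∀ i ∈ s, 0 ≤ a i)
    (ha2 : ∀ i ∈ s, a i ≤ 2) :
    ∏ i ∈ s, a i * (2 - a i) ≤
      ((∏ i ∈ s, a i) ^ (#s : ℝ)⁻¹ * (2 - (∏ i ∈ s, a i) ^ (#s : ℝ)⁻¹)) ^ #s := by
  rcases s.eq_empty_or_nonempty with rfl | hs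
  · simp
  rw [prod_mul_distrib, mul_pow,
    Real.rpow_inv_natCast_pow (prod_nonneg ha0) hs.card_pos.ne']
  exact mul_le_mul_of_nonneg_left (prod_two_sub_le s a ha0 ha2) (prod_nonneg ha0)

end AMGM

section Blocks

variable {α κ : Type*}

lemma sum_prod_filter_fiber {β : Type*} [CommSemiring β] [Fintype α] [DecidableEq α] [Fintype κ]
    [DecidableEq κ] (blk : α → κ) (F : κ → Finset α → β) :
    ∑ S : Finset α, ∏ j, F j {i ∈ S | blk i = j} =
      ∏ j, ∑ T ∈ ({i | blk i = j} : Finset α).powerset, F j T := by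
  rw [prod_univ_sum]
  refine sum_nbij' (fun S j => {i ∈ S | blk i = j}) (fun T => univ.biUnion T)
    (fun S _ => ?_) (fun _ _ => mem_univ _) (fun S _ => ?_) (fun T hT => ?_) (fun _ _ => rfl)
  · simp only [Fintype.mem_piFinset, mem_powerset]
    exact fun j => filter_subset_filter _ (subset_univ S)
  · exact biUnion_filter_eq_of_maps_to fun _ _ => mem_univ _
  · simp only [Fintype.mem_piFinset, mem_powerset] at hT
    funext j
    ext i
    simp only [mem_filter, mem_biUnion, mem_univ, true_and]
    exact ⟨fun ⟨⟨j', hi⟩, hij⟩ => by rwa [← hij, (by simpa using hT j' hi : blk i = j')],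
      fun hi => ⟨⟨j, hi⟩, by simpa using hT j hi⟩⟩

/-- The weight of `T` as a Bernoulli(c) subset of `A`; meaningful only for `T ⊆ A`. -/
noncomputable def bernWeightOn (A : Finset α) (c : ℝ) (T : Finset α) : ℝ :=
  c ^ #T * (1 - c) ^ (#A - #T)

lemma bernWeight_eq_bernWeightOn_univ (ν : ℕ) (c : ℝ) (S : Finset (Fin ν)) :
    bernWeight ν c S = bernWeightOn univ c S := by
  simp [bernWeight, bernWeightOn]

lemma bernWeightOn_eq_prod [DecidableEq α] {A T : Finset α} (c : ℝ) (hT : T ⊆ A) :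
    bernWeightOn A c T = ∏ i ∈ A, if i ∈ T then c else 1 - c := by
  rw [prod_ite, prod_const, prod_const, filter_not, filter_mem_eq_inter,
    inter_eq_right.2 hT, card_sdiff_of_subset hT, bernWeightOn]

lemma sum_bernWeightOn (A : Finset α) (c : ℝ) : ∑ T ∈ A.powerset, bernWeightOn A c T = 1 := by
  simp [bernWeightOn, sum_pow_mul_eq_add_pow]

lemma bernWeightOn_univ_eq_prod_fiber [Fintype α] [DecidableEq α] [Fintype κ] [DecidableEq κ]
    (blk : α → κ) (c : ℝ) (S : Finset α) :
    bernWeightOn univ c S = ∏ j, bernWeightOn {i | blk i = j} c {i ∈ S | blk i = j} := by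
  rw [bernWeightOn_eq_prod c (subset_univ S), ← prod_fiberwise univ blk]
  refine prod_congr rfl fun j _ => ?_
  rw [bernWeightOn_eq_prod c (filter_subset_filter _ (subset_univ S))]
  refine prod_congr rfl fun i hi => ?_
  simp_all

lemma sum_bernWeightOn_mul_of_not_both_nonempty [DecidableEq α] (A : Finset α) (c : ℝ) :
    ∑ T ∈ A.powerset, ∑ T' ∈ A.powerset,
        (if ¬ (T.Nonempty ∧ T'.Nonempty) then bernWeightOn A c T * bernWeightOn A c T' else 0) =
      (1 - c) ^ #A * (2 - (1 - c) ^ #A) := by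
  have hempty : bernWeightOn A c ∅ = (1 - c) ^ #A := by simp [bernWeightOn]
  have hfirst : ∑ T' ∈ A.powerset, (if ¬ ((∅ : Finset α).Nonempty ∧ T'.Nonempty)
      then bernWeightOn A c ∅ * bernWeightOn A c T' else 0) = (1 - c) ^ #A := by
    simp only [Finset.not_nonempty_empty, false_and, not_false_eq_true, if_true, ← mul_sum,
      sum_bernWeightOn, hempty, mul_one]
  have hrest : ∀ T ∈ A.powerset.erase ∅, ∑ T' ∈ A.powerset,
      (if ¬ (T.Nonempty ∧ T'.Nonempty) then bernWeightOn A c T * bernWeightOn A c T' else 0) =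
        bernWeightOn A c T * (1 - c) ^ #A := by
    intro T hT
    simp only [nonempty_iff_ne_empty.2 (ne_of_mem_erase hT), true_and, not_nonempty_iff_eq_empty]
    rw [sum_ite_eq' _ _ (fun T' => bernWeightOn A c T * bernWeightOn A c T'), hempty,
      if_pos (empty_mem_powerset A)]
  have hnonempty : ∑ T ∈ A.powerset.erase ∅, bernWeightOn A c T = 1 - (1 - c) ^ #A := by
    have htotal := sum_bernWeightOn A c
    rw [← add_sum_erase _ _ (empty_mem_powerset A), hempty] at htotal
    linarith
  rw [← add_sum_erase _ _ (empty_mem_powerset A), hfirst, sum_congr rfl hrest, ← sum_mul,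
    hnonempty]
  ring

lemma sum_not_bicoloured_eq_prod [Fintype α] [DecidableEq α] [Fintype κ] [DecidableEq κ]
    (blk : α → κ) (c : ℝ) :
    ∑ Y : Finset α, ∑ B : Finset α,
        (if ¬ ∃ j, (∃ y ∈ Y, blk y = j) ∧ (∃ b ∈ B, blk b = j)
          then bernWeightOn univ c Y * bernWeightOn univ c B else 0) =
      ∏ j, (1 - c) ^ #{i | blk i = j} * (2 - (1 - c) ^ #{i | blk i = j}) := by
  set G : κ → Finset α → Finset α → ℝ := fun j T T' =>
    if ¬ (T.Nonempty ∧ T'.Nonempty)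
      then bernWeightOn {i | blk i = j} c T * bernWeightOn {i | blk i = j} c T' else 0
  have hsummand : ∀ Y B : Finset α,
      (if ¬ ∃ j, (∃ y ∈ Y, blk y = j) ∧ (∃ b ∈ B, blk b = j)
        then bernWeightOn univ c Y * bernWeightOn univ c B else 0) =
      ∏ j, G j {i ∈ Y | blk i = j} {i ∈ B | blk i = j} := by
    intro Y B
    rw [prod_ite_zero, prod_mul_distrib, ← bernWeightOn_univ_eq_prod_fiber,
      ← bernWeightOn_univ_eq_prod_fiber]
    simp [filter_nonempty_iff]
  calc _ = ∑ Y : Finset α, ∏ j, ∑ T' ∈ ({i | blk i = j} : Finset α).powerset,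
          G j {i ∈ Y | blk i = j} T' := by
        simp only [hsummand, sum_prod_filter_fiber blk]
    _ = ∏ j, ∑ T ∈ ({i | blk i = j} : Finset α).powerset,
          ∑ T' ∈ ({i | blk i = j} : Finset α).powerset, G j T T' :=
        sum_prod_filter_fiber blk (fun j T => ∑ T' ∈ _, G j T T')
    _ = _ := prod_congr rfl fun j _ => sum_bernWeightOn_mul_of_not_both_nonempty _ c

end Blocks

theorem no_block_bicoloured_general (ν s : ℕ) (blk : Fin ν → Fin s)
    (c : ℝ) (hc0 : 0 ≤ c) (hc1 : c ≤ 1) :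
    ∑ Y ∈ (Finset.univ : Finset (Fin ν)).powerset,
      ∑ B ∈ (Finset.univ : Finset (Fin ν)).powerset,
        (if ¬ ∃ j : Fin s, (∃ y ∈ Y, blk y = j) ∧ (∃ b ∈ B, blk b = j)
          then bernWeight ν c Y * bernWeight ν c B else 0)
      ≤ ((1 - c) ^ ((ν : ℝ) / (s : ℝ)) * (2 - (1 - c) ^ ((ν : ℝ) / (s : ℝ)))) ^ s := by
  have hq0 : 0 ≤ 1 - c := by linarith
  have hgeom : (∏ j, (1 - c) ^ #{i | blk i = j}) ^ (#(univ : Finset (Fin s)) : ℝ)⁻¹ =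
      (1 - c) ^ ((ν : ℝ) / s) := by
    rw [prod_pow_eq_pow_sum, ← card_eq_sum_card_fiberwise fun _ _ => mem_univ _, card_univ,
      card_univ, Fintype.card_fin, Fintype.card_fin, ← Real.rpow_natCast, ← Real.rpow_mul hq0,
      div_eq_mul_inv]
  have hamgm := prod_mul_two_sub_le univ (fun j => (1 - c) ^ #{i | blk i = j})
    (fun _ _ => pow_nonneg hq0 _)
    (fun _ _ => (pow_le_one₀ hq0 (by linarith)).trans one_le_two)
  rw [hgeom, card_univ, Fintype.card_fin] at hamgm
  simp only [powerset_univ, bernWeight_eq_bernWeightOn_univ]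
  -- `convert` reconciles the `Fin`-specific decidability instances of the `if` with generic ones
  convert (sum_not_bicoloured_eq_prod blk c).trans_le hamgm

/-- If `[ν]` is partitioned into `s` blocks and elements are independently
coloured yellow (resp. blue) with probability `c`, then the probability that
no block is bicoloured is at most `[(1-c)^{ν/s}·(2-(1-c)^{ν/s})]^s`. -/
theorem no_block_bicoloured (ν s : ℕ) (hs : 0 < s) (blk : Fin ν → Fin s)
    (hsurj : Function.Surjective blk)
    (c : ℝ) (hc0 : 0 ≤ c) (hc1 : c ≤ 1) :
    ∑ Y ∈ (Finset.univ : Finset (Fin ν)).powerset,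
      ∑ B ∈ (Finset.univ : Finset (Fin ν)).powerset,
        (if ¬ ∃ j : Fin s, (∃ y ∈ Y, blk y = j) ∧ (∃ b ∈ B, blk b = j)
          then bernWeight ν c Y * bernWeight ν c B else 0)
      ≤ ((1 - c) ^ ((ν : ℝ) / (s : ℝ)) * (2 - (1 - c) ^ ((ν : ℝ) / (s : ℝ)))) ^ s :=
  no_block_bicoloured_general ν s blk c hc0 hc1
end

section
/- For real c∈(0,1) and positive reals ν, the function g(s) = [(1-c)^{ν/s}·(2-(1-c)^{ν/s})]^s is monotonically increasing in s>0. -/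
/-!
Write `q = (1-c)^(ν/s₁)` and `r = s₁/s₂ ∈ (0,1]`, so that `(1-c)^(ν/s₂) = q^r` and `s₁ = r s₂`.
After taking `s₂`-th roots the claim becomes `q^r (2-q)^r ≤ q^r (2-q^r)`, i.e.
`q^r + (2-q)^r ≤ 2`, which is concavity of `x ↦ x^r` (Bernoulli's inequality at `1 ± (1-q)`).
-/

open Real

lemma rpow_add_two_sub_rpow_le_two {q r : ℝ} (hq0 : 0 ≤ q) (hq2 : q ≤ 2) (hr0 : 0 ≤ r)
    (hr1 : r ≤ 1) : q ^ r + (2 - q) ^ r ≤ 2 := by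
  have hq : q ^ r ≤ 1 + r * (q - 1) := by
    simpa using rpow_one_add_le_one_add_mul_self (s := q - 1) (by linarith) hr0 hr1
  have h2q : (2 - q) ^ r ≤ 1 + r * (1 - q) := by
    simpa [show 1 + (1 - q) = 2 - q by ring] using
      rpow_one_add_le_one_add_mul_self (s := 1 - q) (by linarith) hr0 hr1
  linarith

lemma mul_two_sub_rpow_mul_le {q r s : ℝ} (hq0 : 0 ≤ q) (hq2 : q ≤ 2) (hr0 : 0 ≤ r)
    (hr1 : r ≤ 1) (hs : 0 ≤ s) :
    (q * (2 - q)) ^ (r * s) ≤ (q ^ r * (2 - q ^ r)) ^ s := by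
  have hqr : 0 ≤ q ^ r := rpow_nonneg hq0 r
  have hsum := rpow_add_two_sub_rpow_le_two hq0 hq2 hr0 hr1
  rw [rpow_mul (mul_nonneg hq0 (by linarith)), mul_rpow hq0 (by linarith)]
  exact rpow_le_rpow (mul_nonneg hqr (rpow_nonneg (by linarith) r))
    (mul_le_mul_of_nonneg_left (by linarith) hqr) hs

/-- For `c ∈ (0,1)` and `ν > 0`, the function
`s ↦ [(1-c)^{ν/s}·(2-(1-c)^{ν/s})]^s` is monotonically increasing in `s > 0`. -/
theorem g_increasing_in_s (c ν : ℝ) (hc0 : 0 < c) (hc1 : c < 1) (hν : 0 < ν) :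
    ∀ s₁ s₂ : ℝ, 0 < s₁ → s₁ ≤ s₂ →
      ((1 - c) ^ (ν / s₁) * (2 - (1 - c) ^ (ν / s₁))) ^ s₁
        ≤ ((1 - c) ^ (ν / s₂) * (2 - (1 - c) ^ (ν / s₂))) ^ s₂ := by
  intro s₁ s₂ hs₁ hle
  have hs₂ : 0 < s₂ := hs₁.trans_le hle
  have hq1 : (1 - c) ^ (ν / s₁) ≤ 1 :=
    rpow_le_one (by linarith) (by linarith) (div_pos hν hs₁).le
  have hpow : (1 - c) ^ (ν / s₂) = ((1 - c) ^ (ν / s₁)) ^ (s₁ / s₂) := by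
    rw [← rpow_mul (by linarith)]
    congr 1
    field_simp
  have key := mul_two_sub_rpow_mul_le (q := (1 - c) ^ (ν / s₁)) (rpow_nonneg (by linarith) _) (by linarith)
    (div_pos hs₁ hs₂).le ((div_le_one hs₂).mpr hle) hs₂.le
  rwa [← hpow, div_mul_cancel₀ s₁ hs₂.ne'] at key
end

section
/- Let H=(V,E) be a 3-uniform hypergraph with all hyperedge weights equal to γ>0 and set y=γ+1, y'=y^{1/2}, γ'=y'-1. Let G be the multigraph on V obtained by replacing each hyperedge {u,v,w} by the three edges {u,v},{v,w},{u,w}, each of weight γ'. Then Z_Tutte(G;2,γ') = (y')^{|E|}·Z_Tutte(H;2,γ). -/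
open scoped Classical

/-- Number of connected components of the subhypergraph `(V, F)`. -/
noncomputable def kappa {V : Type*} [Fintype V] (F : Finset (Finset V)) : ℕ :=
  Nat.card (Quotient (Relation.EqvGen.setoid (fun u v : V => ∃ f ∈ F, u ∈ f ∧ v ∈ f)))

/-- Number of connected components of the multigraph with edges indexed by `A`. -/
noncomputable def kappaI {V ι : Type*} [Fintype V] (ends : ι → Finset V) (A : Finset ι) : ℕ :=
  Nat.card (Quotient (Relation.EqvGen.setoid
    (fun u v : V => ∃ i ∈ A, u ∈ ends i ∧ v ∈ ends i)))

/-- Index type for the multigraph obtained from a `3`-uniform hypergraph by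
replacing each hyperedge by its three constituent pairs. -/
abbrev TriIdx {V : Type*} [DecidableEq V] (E : Finset (Finset V)) :=
  Σ f : {f : Finset V // f ∈ E}, {p : Finset V // p ∈ Finset.powersetCard 2 f.1}


/-!
Both sides are evaluated through the Fortuin–Kasteleyn representation at `q = 2`: each sum
over edge subsets equals a sum over `2`-colourings `σ` of a product of one factor `1 + w` per
monochromatic edge. For a fixed `σ` the three pairs of a hyperedge contribute a factor
`y' = √(γ + 1)` each if the hyperedge is monochromatic, giving `y'³ = y' · (1 + γ)`, and
otherwise exactly one of the pairs is monochromatic (two colours on three vertices), giving `y'`.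
-/

open Finset

def IsMonochromatic {V C : Type*} (σ : V → C) (f : Finset V) : Prop :=
  ∀ u ∈ f, ∀ v ∈ f, σ u = σ v

section FortuinKasteleyn

variable {V ι C R : Type*} [Fintype V] [Fintype C]

theorem card_pow_kappaI (ends : ι → Finset V) (A : Finset ι) :
    Fintype.card C ^ kappaI ends A
      = #{σ : V → C | ∀ i ∈ A, IsMonochromatic σ (ends i)} := by
  let adj : V → V → Prop := fun u v => ∃ i ∈ A, u ∈ ends i ∧ v ∈ ends i
  have hker (σ : V → C) :
      Relation.EqvGen.setoid adj ≤ Setoid.ker σ ↔ ∀ i ∈ A, IsMonochromatic σ (ends i) := by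
    rw [Setoid.gi.gc.le_iff_le]
    exact ⟨fun h i hi u hu v hv => h u v ⟨i, hi, hu, hv⟩,
      fun h u v ⟨i, hi, hu, hv⟩ => h i hi u hu v hv⟩
  rw [← Fintype.card_subtype, ← Nat.card_eq_fintype_card, ← Nat.card_eq_fintype_card,
    ← Nat.card_congr (Equiv.subtypeEquivRight hker), Nat.card_congr (Setoid.liftEquiv _),
    Nat.card_fun, kappaI]

theorem sum_powerset_card_pow_kappaI_eq_sum_colourings [CommSemiring R]
    (ends : ι → Finset V) (s : Finset ι) (w : R) :
    ∑ A ∈ s.powerset, (Fintype.card C : R) ^ kappaI ends A * w ^ #A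
      = ∑ σ : V → C, ∏ i ∈ s, (1 + if IsMonochromatic σ (ends i) then w else 0) := by
  simp_rw [prod_one_add, prod_ite_zero, prod_const]
  rw [sum_comm]
  refine sum_congr rfl fun A _ => ?_
  rw [← Nat.cast_pow, card_pow_kappaI, natCast_card_filter, sum_mul]
  simp_rw [ite_mul, one_mul, zero_mul]

end FortuinKasteleyn

section Triangle

variable {V R : Type*} [DecidableEq V] [CommRing R]

theorem isMonochromatic_pair {C : Type*} (σ : V → C) (u v : V) :
    IsMonochromatic σ {u, v} ↔ σ u = σ v := by
  simp only [IsMonochromatic, mem_insert, mem_singleton, forall_eq_or_imp, forall_eq]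
  grind

theorem isMonochromatic_triple {C : Type*} (σ : V → C) (a b c : V) :
    IsMonochromatic σ {a, b, c} ↔ σ a = σ b ∧ σ a = σ c := by
  simp only [IsMonochromatic, mem_insert, mem_singleton, forall_eq_or_imp, forall_eq]
  grind

theorem powersetCard_two_triple {a b c : V} (hab : a ≠ b) (hac : a ≠ c) (hbc : b ≠ c) :
    powersetCard 2 {a, b, c} = {{a, b}, {b, c}, {a, c}} := by
  rw [powersetCard_succ_insert (by simp [hab, hac]), powersetCard_succ_insert (by simpa using hbc),
    powersetCard_eq_empty.2 (by simp)]
  simp [powersetCard_one]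

theorem prod_pairs_eq_of_card_eq_three {f : Finset V} (hf : #f = 3) (σ : V → Bool) (x : R) :
    ∏ p ∈ powersetCard 2 f, (1 + if IsMonochromatic σ p then x - 1 else 0)
      = x * (1 + if IsMonochromatic σ f then x ^ 2 - 1 else 0) := by
  obtain ⟨a, b, c, hab, hac, hbc, rfl⟩ := card_eq_three.mp hf
  have hab_bc : ({a, b} : Finset V) ≠ {b, c} := fun h => by
    simpa [hab, hac] using congrArg (a ∈ ·) h
  have hab_ac : ({a, b} : Finset V) ≠ {a, c} := fun h => by
    simpa [hab.symm, hbc] using congrArg (b ∈ ·) h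
  have hbc_ac : ({b, c} : Finset V) ≠ {a, c} := fun h => by
    simpa [hab, hac] using (congrArg (a ∈ ·) h).symm
  rw [powersetCard_two_triple hab hac hbc, prod_insert (by simp [hab_bc, hab_ac]),
    prod_pair hbc_ac, isMonochromatic_triple]
  simp only [isMonochromatic_pair]
  cases σ a <;> cases σ b <;> cases σ c <;>
    simp only [Bool.false_eq_true, Bool.true_eq_false, ↓reduceIte, add_zero, add_sub_cancel,
      and_self, and_true, and_false] <;> ring

end Triangle

theorem prod_triIdx_eq {V R : Type*} [Fintype V] [DecidableEq V] [CommRing R]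
    {E : Finset (Finset V)} (h3 : ∀ f ∈ E, #f = 3) (σ : V → Bool) (x : R) :
    ∏ e : TriIdx E, (1 + if IsMonochromatic σ e.2.1 then x - 1 else 0)
      = x ^ #E * ∏ f ∈ E, (1 + if IsMonochromatic σ f then x ^ 2 - 1 else 0) := by
  rw [Fintype.prod_sigma]
  simp_rw [prod_coe_sort (powersetCard 2 _) fun p => 1 + if IsMonochromatic σ p then x - 1 else 0]
  rw [prod_coe_sort E fun f => ∏ p ∈ powersetCard 2 f,
      (1 + if IsMonochromatic σ p then x - 1 else 0),
    prod_congr rfl fun f hf => prod_pairs_eq_of_card_eq_three (h3 f hf) σ x,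
    prod_mul_distrib, prod_const]

/-- Replacing each hyperedge `{u,v,w}` of a `3`-uniform hypergraph `H` (all
weights `γ > 0`, `y = γ+1`, `y' = √y`, `γ' = y'-1`) by the three edges
`{u,v},{v,w},{u,w}` of weight `γ'` yields a multigraph `G` with
`Z_Tutte(G;2,γ') = (y')^{|E|}·Z_Tutte(H;2,γ)`. -/
theorem three_uniform_to_graph {V : Type*} [Fintype V] [DecidableEq V]
    (E : Finset (Finset V)) (h3 : ∀ f ∈ E, f.card = 3) (γ : ℝ) (hγ : 0 < γ) :
    let γ' : ℝ := Real.sqrt (γ + 1) - 1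
    let ends : TriIdx E → Finset V := fun e => e.2.1
    (∑ A ∈ (Finset.univ : Finset (TriIdx E)).powerset,
        (2 : ℝ) ^ kappaI ends A * γ' ^ A.card)
      = Real.sqrt (γ + 1) ^ E.card *
          ∑ F ∈ E.powerset, (2 : ℝ) ^ kappa F * γ ^ F.card := by
  intro γ' ends
  have hsq : Real.sqrt (γ + 1) ^ 2 - 1 = γ := by
    rw [Real.sq_sqrt (by linarith)]
    ring
  have htwo : (2 : ℝ) = Fintype.card Bool := by simp
  change _ = _ * ∑ F ∈ E.powerset, (2 : ℝ) ^ kappaI id F * γ ^ #F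
  rw [htwo, sum_powerset_card_pow_kappaI_eq_sum_colourings,
    sum_powerset_card_pow_kappaI_eq_sum_colourings, mul_sum]
  refine sum_congr rfl fun σ _ => ?_
  rw [prod_triIdx_eq h3 σ, hsq]
  rfl
end

section
/- Let B=(U,V,E) be a bipartite graph and μ>0. Construct the hypergraph H with vertex set U∪{s} (s a new vertex) and hyperedge multiset {Γ(v)∪{s} : v∈V}, where Γ(v) is the neighbourhood of v in U. Then Z_IS(B;μ) = (μ+1)^{-1}·Z_Tutte(H;μ+1,μ), where Z_IS(B;μ)=Σ_I μ^{|I|} over independent sets I of B. -/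
open scoped Classical

lemma sum_powerset_pow {α : Type*} (X : Finset α) (μ : ℝ) :
    ∑ S ∈ X.powerset, μ ^ S.card = (μ + 1) ^ X.card := by
  classical
  have h := Finset.prod_add (fun _ : α => μ) (fun _ => 1) X
  simp only [Finset.prod_const, one_pow, mul_one, Finset.prod_const_one] at h
  rw [← h]

lemma kappa_aux {U W : Type*} [Fintype U] [DecidableEq U] [Fintype W]
    (nbr : W → Finset U) (A : Finset W) :
    kappaI (fun v : W => (nbr v).image Sum.inl ∪ ({Sum.inr ()} : Finset (U ⊕ Unit))) A
      = 1 + (Finset.univ.filter (fun u : U => ∀ v ∈ A, u ∉ nbr v)).card := by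
  classical
  set ends : W → Finset (U ⊕ Unit) :=
    fun v => (nbr v).image Sum.inl ∪ {Sum.inr ()} with hends
  set R : (U ⊕ Unit) → (U ⊕ Unit) → Prop :=
    fun x y => ∃ i ∈ A, x ∈ ends i ∧ y ∈ ends i with hR
  have hs : ∀ i, (Sum.inr () : U ⊕ Unit) ∈ ends i := by intro i; simp [hends]
  have hmem : ∀ (u : U) i, (Sum.inl u : U ⊕ Unit) ∈ ends i ↔ u ∈ nbr i := by
    intro u i; simp [hends]
  set conn : (U ⊕ Unit) → Prop := fun x => ∃ i ∈ A, x ∈ ends i with hconn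
  have key : ∀ x y, Relation.EqvGen R x y → x = y ∨ (conn x ∧ conn y) := by
    intro x y h
    induction h with
    | rel x y h => rcases h with ⟨i, hi, hx, hy⟩; exact Or.inr ⟨⟨i, hi, hx⟩, ⟨i, hi, hy⟩⟩
    | refl x => exact Or.inl rfl
    | symm x y _ ih => tauto
    | trans x y z _ _ ih1 ih2 =>
        rcases ih1 with rfl | ⟨h1, h2⟩ <;> rcases ih2 with rfl | ⟨h3, h4⟩ <;> tauto
  have conn_rel : ∀ x, conn x → Relation.EqvGen R x (Sum.inr ()) := by
    rintro x ⟨i, hi, hx⟩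
    exact Relation.EqvGen.rel _ _ ⟨i, hi, hx, hs i⟩
  set P : U → Prop := fun u => ∀ v ∈ A, u ∉ nbr v with hP
  have notP : ∀ u, ¬ P u ↔ conn (Sum.inl u) := by
    intro u
    constructor
    · intro h
      rcases not_forall.mp h with ⟨v, hv⟩
      rcases Classical.not_imp.mp hv with ⟨hvA, hu⟩
      exact ⟨v, hvA, (hmem u v).mpr (not_not.mp hu)⟩
    · rintro ⟨i, hi, hx⟩ hPu
      exact hPu i hi ((hmem u i).mp hx)
  let f : U ⊕ Unit → Option {u : U // P u} := fun x =>
    match x with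
    | Sum.inl u => if h : P u then some ⟨u, h⟩ else none
    | Sum.inr _ => none
  have fnone : ∀ x, conn x → f x = none := by
    intro x hx
    cases x with
    | inl u => simp only [f]; exact dif_neg ((notP u).mpr hx)
    | inr u => rfl
  have resp : ∀ x y, Relation.EqvGen R x y → f x = f y := by
    intro x y h
    rcases key x y h with rfl | ⟨hx, hy⟩
    · rfl
    · rw [fnone x hx, fnone y hy]
  have e : Quotient (Relation.EqvGen.setoid R) ≃ Option {u : U // P u} := by
    refine Equiv.ofBijective (Quotient.lift f (fun x y h => resp x y h)) ⟨?_, ?_⟩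
    · refine Quotient.ind fun x => Quotient.ind fun y h => Quotient.sound ?_
      simp only [Quotient.lift_mk] at h
      show Relation.EqvGen R x y
      have fval : ∀ u : U, f (Sum.inl u) = if h : P u then some ⟨u, h⟩ else none :=
        fun u => rfl
      cases x with
      | inl u =>
        cases y with
        | inl u' =>
          by_cases h1 : P u
          · by_cases h2 : P u'
            · rw [fval, fval, dif_pos h1, dif_pos h2] at h
              obtain rfl : u = u' := by simpa using h
              exact Relation.EqvGen.refl _
            · rw [fval, fval, dif_pos h1, dif_neg h2] at h
              exact absurd h (by simp)
          · by_cases h2 : P u'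
            · rw [fval, fval, dif_neg h1, dif_pos h2] at h
              exact absurd h (by simp)
            · exact Relation.EqvGen.trans _ _ _ (conn_rel _ ((notP u).mp h1))
                (Relation.EqvGen.symm _ _ (conn_rel _ ((notP u').mp h2)))
        | inr v =>
          cases v
          have h1 : ¬ P u := by
            intro h1; rw [fval, dif_pos h1] at h; exact absurd h (by simp [f])
          exact conn_rel _ ((notP u).mp h1)
      | inr v =>
        cases v
        cases y with
        | inl u' =>
          have h2 : ¬ P u' := by
            intro h2; rw [fval, dif_pos h2] at h; exact absurd h (by simp [f])
          exact Relation.EqvGen.symm _ _ (conn_rel _ ((notP u').mp h2))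
        | inr v' => cases v'; exact Relation.EqvGen.refl _
    · rintro (_ | ⟨u, hu⟩)
      · exact ⟨⟦Sum.inr ()⟧, rfl⟩
      · exact ⟨⟦Sum.inl u⟧, by simp [f, dif_pos hu]⟩
  have : kappaI ends A = Nat.card (Quotient (Relation.EqvGen.setoid R)) := rfl
  rw [this, Nat.card_congr e, Nat.card_eq_fintype_card, Fintype.card_option,
    Fintype.card_subtype]
  rw [Nat.add_comm]

set_option maxHeartbeats 1000000 in
/-- From a bipartite graph `B = (U,V,E)` build the hypergraph `H` on `U ∪ {s}`
with one hyperedge `Γ(v) ∪ {s}` per `v ∈ V`.  Then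
`Z_IS(B;μ) = (μ+1)⁻¹ · Z_Tutte(H;μ+1,μ)`. -/
theorem bis_to_hypertutte {U W : Type*} [Fintype U] [DecidableEq U]
    [Fintype W] [DecidableEq W]
    (E : Finset (U × W)) (μ : ℝ) (hμ : 0 < μ) :
    let nbr : W → Finset U := fun v => (E.filter (fun e => e.2 = v)).image Prod.fst
    let ends : W → Finset (U ⊕ Unit) := fun v =>
      (nbr v).image Sum.inl ∪ {Sum.inr ()}
    (∑ S ∈ (Finset.univ : Finset U).powerset, ∑ T ∈ (Finset.univ : Finset W).powerset,
        if ∀ e ∈ E, ¬(e.1 ∈ S ∧ e.2 ∈ T) then μ ^ (S.card + T.card) else 0)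
      = (μ + 1)⁻¹ *
          ∑ A ∈ (Finset.univ : Finset W).powerset,
            (μ + 1) ^ kappaI ends A * μ ^ A.card := by
  intro nbr ends
  have hμ1 : (μ : ℝ) + 1 ≠ 0 := by positivity
  have hk : ∀ A : Finset W, kappaI ends A
      = 1 + (Finset.univ.filter (fun u : U => ∀ v ∈ A, u ∉ nbr v)).card := by
    intro A
    have h := kappa_aux nbr A
    convert h using 2
    congr!
  rw [Finset.sum_comm, Finset.mul_sum]
  refine Finset.sum_congr rfl fun T _ => ?_
  set X : Finset U := Finset.univ.filter (fun u : U => ∀ v ∈ T, u ∉ nbr v) with hX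
  have hcond : ∀ S : Finset U, (∀ e ∈ E, ¬(e.1 ∈ S ∧ e.2 ∈ T)) ↔ S ⊆ X := by
    intro S
    constructor
    · intro h u hu
      simp only [hX, Finset.mem_filter, Finset.mem_univ, true_and]
      intro v hv hun
      simp only [nbr, Finset.mem_image, Finset.mem_filter] at hun
      rcases hun with ⟨e, ⟨heE, hev⟩, heu⟩
      exact h e heE ⟨heu ▸ hu, hev ▸ hv⟩
    · rintro h e heE ⟨h1, h2⟩
      have := h h1
      simp only [hX, Finset.mem_filter, Finset.mem_univ, true_and] at this
      refine this e.2 h2 ?_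
      simp only [nbr, Finset.mem_image, Finset.mem_filter]
      exact ⟨e, ⟨heE, rfl⟩, rfl⟩
  have hfilter : (Finset.univ : Finset U).powerset.filter
      (fun S => ∀ e ∈ E, ¬(e.1 ∈ S ∧ e.2 ∈ T)) = X.powerset := by
    ext S
    rw [Finset.mem_filter, Finset.mem_powerset, Finset.mem_powerset]
    constructor
    · rintro ⟨-, h⟩; exact (hcond S).mp h
    · intro h; exact ⟨Finset.subset_univ S, (hcond S).mpr h⟩
  calc (∑ S ∈ (Finset.univ : Finset U).powerset,
        if ∀ e ∈ E, ¬(e.1 ∈ S ∧ e.2 ∈ T) then μ ^ (S.card + T.card) else 0)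
      = ∑ S ∈ X.powerset, μ ^ (S.card + T.card) := by
        rw [← Finset.sum_filter, hfilter]
    _ = (∑ S ∈ X.powerset, μ ^ S.card) * μ ^ T.card := by
        rw [Finset.sum_mul]
        exact Finset.sum_congr rfl fun S _ => (pow_add μ S.card T.card)
    _ = (μ + 1) ^ X.card * μ ^ T.card := by rw [sum_powerset_pow]
    _ = (μ + 1)⁻¹ * ((μ + 1) ^ kappaI ends T * μ ^ T.card) := by
        rw [hk T, pow_add, pow_one]
        field_simp
        ring
end

section
/- Let G=(V,E) with edge probabilities p(e)∈[0,1] and q≥1. Colour each connected component of a sample A from the random cluster distribution RC(G;q,p) red independently with probability r, green otherwise, and let R be the union of red components. Then conditioned on R=V₁, the red subgraph is distributed as RC(G[V₁];rq,p), the green subgraph as RC(G[V∖V₁];(1-r)q,p), and they are conditionally independent. -/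
open scoped Classical

/-- Number of connected components of the graph `(S, F)` on the vertex set `S`. -/
noncomputable def kappaOn {V : Type*} (S : Finset V) (F : Finset (Finset V)) : ℕ :=
  Nat.card (Quotient (Relation.EqvGen.setoid
    (fun u v : {x : V // x ∈ S} => ∃ f ∈ F, u.1 ∈ f ∧ v.1 ∈ f)))

/-!
Edges inside `V₁` or inside `V₁ᶜ` never join the two sides, so for `A₁ ⊆ E[V₁]`, `A₂ ⊆ E[V₁ᶜ]`
the components of `A₁ ∪ A₂` are those of `A₁` on `V₁` together with those of `A₂` on `V₁ᶜ`.
Hence the joint weight `q^κ ∏ p ∏ (1 - p) · r^κ₁ (1 - r)^κ₂` factors as `C · w₁(A₁) · w₂(A₂)`,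
where `w₁`, `w₂` are the random cluster weights on `G[V₁]`, `G[V₁ᶜ]` with parameters `rq`,
`(1 - r)q`, and `C` is the product of `1 - p e` over the edges between `V₁` and `V₁ᶜ`.
The normaliser factors in the same way, and `C` cancels.
-/

open Relation Finset

def Quot.equivQuotientEqvGen {α : Type*} (r : α → α → Prop) :
    Quot r ≃ Quotient (EqvGen.setoid r) where
  toFun := Quot.lift (Quotient.mk _) fun a b h => Quot.sound (EqvGen.rel a b h)
  invFun := Quotient.lift (Quot.mk r) fun _ _ => Quot.eqvGen_sound
  left_inv := Quot.ind fun _ => rfl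
  right_inv := Quotient.ind fun _ => rfl

def Quot.equivSumSubtype {α : Type*} (r : α → α → Prop) (P P' : α → Prop)
    [DecidablePred P] (hP' : ∀ x, P' x ↔ ¬ P x) (hr : ∀ a b, r a b → (P a ↔ P b)) :
    Quot r ≃ Quot (fun a b : Subtype P => r a b) ⊕ Quot (fun a b : Subtype P' => r a b) where
  toFun := Quot.lift
    (fun x => if h : P x then .inl (Quot.mk _ ⟨x, h⟩) else .inr (Quot.mk _ ⟨x, (hP' x).2 h⟩))
    fun a b hab => by
      by_cases ha : P a
      · rw [dif_pos ha, dif_pos ((hr a b hab).1 ha)]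
        exact congrArg Sum.inl (Quot.sound hab)
      · rw [dif_neg ha, dif_neg (mt (hr a b hab).2 ha)]
        exact congrArg Sum.inr (Quot.sound hab)
  invFun := Sum.elim (Quot.lift (fun x => Quot.mk r x.1) fun _ _ => Quot.sound)
    (Quot.lift (fun x => Quot.mk r x.1) fun _ _ => Quot.sound)
  left_inv := Quot.ind fun x => by
    by_cases h : P x
    · simp only [dif_pos h, Sum.elim_inl]
    · simp only [dif_neg h, Sum.elim_inr]
  right_inv := by
    rintro (x | x) <;> induction x using Quot.ind with | mk x => ?_
    · simp only [Sum.elim_inl, dif_pos x.2]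
    · simp only [Sum.elim_inr, dif_neg ((hP' x.1).1 x.2)]

theorem Nat.card_quotient_eqvGen {α : Type*} (r : α → α → Prop) :
    Nat.card (Quotient (EqvGen.setoid r)) = Nat.card (Quot r) :=
  (Nat.card_congr (Quot.equivQuotientEqvGen r)).symm

theorem Finset.prod_sdiff_union_eq_mul {α β : Type*} [DecidableEq α] [CommMonoid β]
    {E E₁ E₂ B₁ B₂ : Finset α} (hE₁ : E₁ ⊆ E) (hE₂ : E₂ ⊆ E) (hE : Disjoint E₁ E₂)
    (hB₁ : B₁ ⊆ E₁) (hB₂ : B₂ ⊆ E₂) (g : α → β) :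
    ∏ x ∈ E \ (B₁ ∪ B₂), g x =
      (∏ x ∈ E₁ \ B₁, g x) * (∏ x ∈ E₂ \ B₂, g x) * ∏ x ∈ E \ (E₁ ∪ E₂), g x := by
  have hE₁₂ := disjoint_left.1 hE
  rw [← prod_union (disjoint_left.2 fun x hx₁ hx₂ => by grind),
    ← prod_union (disjoint_left.2 fun x hx₁ hx₂ => by grind)]
  congr 1
  ext x
  grind

theorem Finset.sum_sum_eq_mul_sum_mul_sum {ι κ R : Type*} [CommSemiring R]
    {s : Finset ι} {t : Finset κ} {f : ι → κ → R} {c : R} {g : ι → R} {h : κ → R}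
    (hf : ∀ i ∈ s, ∀ j ∈ t, f i j = c * g i * h j) :
    ∑ i ∈ s, ∑ j ∈ t, f i j = c * (∑ i ∈ s, g i) * ∑ j ∈ t, h j := by
  rw [mul_assoc, sum_mul_sum, mul_sum]
  refine sum_congr rfl fun i hi => ?_
  rw [mul_sum]
  exact sum_congr rfl fun j hj => by rw [hf i hi j hj, mul_assoc]

theorem mul_mul_div_mul_mul_cancel_left {K : Type*} [Field K] {c : K} (hc : c ≠ 0)
    (x y X Y : K) : c * x * y / (c * X * Y) = x / X * y / Y := by
  rw [mul_assoc, mul_assoc, mul_div_mul_left _ _ hc, mul_div_mul_comm, mul_div_assoc]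

section Colouring

variable {V : Type*} [Fintype V] [DecidableEq V] {E : Finset (Finset V)}

theorem kappa_union_eq_kappaOn_add_kappaOn (S : Finset V) {B₁ B₂ : Finset (Finset V)}
    (h₁ : ∀ f ∈ B₁, f ⊆ S) (h₂ : ∀ f ∈ B₂, f ⊆ Sᶜ) :
    kappa (B₁ ∪ B₂) = kappaOn S B₁ + kappaOn Sᶜ B₂ := by
  set r : V → V → Prop := fun u v => ∃ f ∈ B₁ ∪ B₂, u ∈ f ∧ v ∈ f
  have hr : ∀ u v, r u v → (u ∈ S ↔ v ∈ S) := by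
    rintro u v ⟨f, hf, hu, hv⟩
    rcases mem_union.1 hf with hf | hf
    · exact iff_of_true (h₁ f hf hu) (h₁ f hf hv)
    · exact iff_of_false (mem_compl.1 (h₂ f hf hu)) (mem_compl.1 (h₂ f hf hv))
  have hS : (fun u v : {x // x ∈ S} => r u v) = fun u v => ∃ f ∈ B₁, u.1 ∈ f ∧ v.1 ∈ f := by
    funext u v
    grind [mem_compl]
  have hSc : (fun u v : {x // x ∈ Sᶜ} => r u v) = fun u v => ∃ f ∈ B₂, u.1 ∈ f ∧ v.1 ∈ f := by
    funext u v
    grind [mem_compl]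
  simp only [kappa, kappaOn, Nat.card_quotient_eqvGen]
  rw [Nat.card_congr (Quot.equivSumSubtype r (· ∈ S) (· ∈ Sᶜ) (fun _ => mem_compl) hr),
    Nat.card_sum, hS, hSc]

theorem disjoint_filter_subset_filter_subset_compl (hE : ∀ e ∈ E, e.Nonempty) (S : Finset V) :
    Disjoint (E.filter (· ⊆ S)) (E.filter (· ⊆ Sᶜ)) :=
  disjoint_filter.2 fun e he h₁ h₂ =>
    (hE e he).ne_empty (subset_empty.1 (inter_compl S ▸ subset_inter h₁ h₂))

theorem rcWeight_mul_colouring_eq (hE : ∀ e ∈ E, e.Nonempty) (S : Finset V)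
    (p : Finset V → ℝ) (q r : ℝ) {B₁ B₂ : Finset (Finset V)}
    (hB₁ : B₁ ⊆ E.filter (· ⊆ S)) (hB₂ : B₂ ⊆ E.filter (· ⊆ Sᶜ)) :
    q ^ kappa (B₁ ∪ B₂) * (∏ e ∈ B₁ ∪ B₂, p e) * (∏ e ∈ E \ (B₁ ∪ B₂), (1 - p e)) *
        r ^ kappaOn S B₁ * (1 - r) ^ kappaOn Sᶜ B₂ =
      (∏ e ∈ E \ (E.filter (· ⊆ S) ∪ E.filter (· ⊆ Sᶜ)), (1 - p e)) *
        ((r * q) ^ kappaOn S B₁ * (∏ e ∈ B₁, p e) * ∏ e ∈ E.filter (· ⊆ S) \ B₁, (1 - p e)) *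
        (((1 - r) * q) ^ kappaOn Sᶜ B₂ * (∏ e ∈ B₂, p e) *
          ∏ e ∈ E.filter (· ⊆ Sᶜ) \ B₂, (1 - p e)) := by
  have hdisj := disjoint_filter_subset_filter_subset_compl hE S
  rw [kappa_union_eq_kappaOn_add_kappaOn S (fun f hf => (mem_filter.1 (hB₁ hf)).2)
      (fun f hf => (mem_filter.1 (hB₂ hf)).2),
    prod_union (hdisj.mono hB₁ hB₂),
    prod_sdiff_union_eq_mul (filter_subset _ _) (filter_subset _ _) hdisj hB₁ hB₂,
    mul_pow, mul_pow, pow_add]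
  ring

end Colouring

theorem fundamental_lemma_general {V : Type*} [Fintype V] [DecidableEq V]
    (E : Finset (Finset V)) (hE : ∀ e ∈ E, e.card = 2)
    (p : Finset V → ℝ)
    (q r : ℝ)
    (V₁ : Finset V) :
    let V₂ : Finset V := V₁ᶜ
    let E₁ : Finset (Finset V) := E.filter (fun e => e ⊆ V₁)
    let E₂ : Finset (Finset V) := E.filter (fun e => e ⊆ V₂)
    let Pt : Finset (Finset V) → ℝ := fun A =>
      q ^ kappa A * (∏ e ∈ A, p e) * ∏ e ∈ E \ A, (1 - p e)
    -- conditioning on `R = V₁` is non-degenerate: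
    (0 < ∑ B₁ ∈ E₁.powerset, ∑ B₂ ∈ E₂.powerset,
        Pt (B₁ ∪ B₂) * r ^ kappaOn V₁ B₁ * (1 - r) ^ kappaOn V₂ B₂) →
    ∀ A₁ ∈ E₁.powerset, ∀ A₂ ∈ E₂.powerset,
      (Pt (A₁ ∪ A₂) * r ^ kappaOn V₁ A₁ * (1 - r) ^ kappaOn V₂ A₂) /
          (∑ B₁ ∈ E₁.powerset, ∑ B₂ ∈ E₂.powerset,
            Pt (B₁ ∪ B₂) * r ^ kappaOn V₁ B₁ * (1 - r) ^ kappaOn V₂ B₂)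
        = ((r * q) ^ kappaOn V₁ A₁ * (∏ e ∈ A₁, p e) * ∏ e ∈ E₁ \ A₁, (1 - p e)) /
              (∑ B ∈ E₁.powerset,
                (r * q) ^ kappaOn V₁ B * (∏ e ∈ B, p e) * ∏ e ∈ E₁ \ B, (1 - p e))
            * (((1 - r) * q) ^ kappaOn V₂ A₂ * (∏ e ∈ A₂, p e) *
                  ∏ e ∈ E₂ \ A₂, (1 - p e)) /
              (∑ B ∈ E₂.powerset,
                ((1 - r) * q) ^ kappaOn V₂ B * (∏ e ∈ B, p e) * ∏ e ∈ E₂ \ B, (1 - p e)) := by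
  dsimp only
  intro hpos A₁ hA₁ A₂ hA₂
  have hEne : ∀ e ∈ E, e.Nonempty := fun e he => card_pos.1 (by rw [hE e he]; norm_num)
  have hfactor := fun B₁ (hB₁ : B₁ ∈ (E.filter (· ⊆ V₁)).powerset)
      B₂ (hB₂ : B₂ ∈ (E.filter (· ⊆ V₁ᶜ)).powerset) =>
    rcWeight_mul_colouring_eq hEne V₁ p q r (mem_powerset.1 hB₁) (mem_powerset.1 hB₂)
  rw [sum_sum_eq_mul_sum_mul_sum hfactor] at hpos ⊢
  rw [hfactor A₁ hA₁ A₂ hA₂,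
    mul_mul_div_mul_mul_cancel_left (left_ne_zero_of_mul (left_ne_zero_of_mul hpos.ne'))]

/-- Fundamental Lemma (Bollobás–Grimmett–Jansen): colouring the components of
a random cluster sample red with probability `r` and green otherwise, and
conditioning on the red vertex set being `V₁`, the red subgraph is distributed
as `RC(G[V₁];rq,p)`, the green subgraph as `RC(G[V₁ᶜ];(1-r)q,p)`, and they are
conditionally independent. -/
theorem fundamental_lemma {V : Type*} [Fintype V] [DecidableEq V]
    (E : Finset (Finset V)) (hE : ∀ e ∈ E, e.card = 2)
    (p : Finset V → ℝ) (hp : ∀ e ∈ E, 0 ≤ p e ∧ p e ≤ 1)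
    (q r : ℝ) (hq : 1 ≤ q) (hr0 : 0 < r) (hr1 : r < 1)
    (V₁ : Finset V) :
    let V₂ : Finset V := V₁ᶜ
    let E₁ : Finset (Finset V) := E.filter (fun e => e ⊆ V₁)
    let E₂ : Finset (Finset V) := E.filter (fun e => e ⊆ V₂)
    let Pt : Finset (Finset V) → ℝ := fun A =>
      q ^ kappa A * (∏ e ∈ A, p e) * ∏ e ∈ E \ A, (1 - p e)
    -- conditioning on `R = V₁` is non-degenerate:
    (0 < ∑ B₁ ∈ E₁.powerset, ∑ B₂ ∈ E₂.powerset,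
        Pt (B₁ ∪ B₂) * r ^ kappaOn V₁ B₁ * (1 - r) ^ kappaOn V₂ B₂) →
    ∀ A₁ ∈ E₁.powerset, ∀ A₂ ∈ E₂.powerset,
      (Pt (A₁ ∪ A₂) * r ^ kappaOn V₁ A₁ * (1 - r) ^ kappaOn V₂ A₂) /
          (∑ B₁ ∈ E₁.powerset, ∑ B₂ ∈ E₂.powerset,
            Pt (B₁ ∪ B₂) * r ^ kappaOn V₁ B₁ * (1 - r) ^ kappaOn V₂ B₂)
        = ((r * q) ^ kappaOn V₁ A₁ * (∏ e ∈ A₁, p e) * ∏ e ∈ E₁ \ A₁, (1 - p e)) /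
              (∑ B ∈ E₁.powerset,
                (r * q) ^ kappaOn V₁ B * (∏ e ∈ B, p e) * ∏ e ∈ E₁ \ B, (1 - p e))
            * (((1 - r) * q) ^ kappaOn V₂ A₂ * (∏ e ∈ A₂, p e) *
                  ∏ e ∈ E₂ \ A₂, (1 - p e)) /
              (∑ B ∈ E₂.powerset,
                ((1 - r) * q) ^ kappaOn V₂ B * (∏ e ∈ B, p e) * ∏ e ∈ E₂ \ B, (1 - p e)) :=
  fundamental_lemma_general E hE p q r V₁
end

section
/- Let G=(V,E) with edge probabilities p(e)∈[0,1], q≥1, and let p'(e)=p(e)/q. Then the Erdős–Rényi distribution ER(G;p') is stochastically dominated by the random cluster distribution RC(G;q,p): there is a coupling (A,A') with A~ER(G;p'), A'~RC(G;q,p), and A⊆A' almost surely. -/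
/-!
Write `r = p / q`. Opening an edge merges at most two components, so `q ^ κ` drops by at most a
factor `q`, and the heat-bath probability that an edge `e` is open in the random cluster measure,
given the other edges, is at least `r e`. Any measure with this property dominates the product
measure with parameters `r`, by induction on the edges: conditioned on `e` being closed resp.
open, the measure still has the property on the remaining edges and so is coupled with the
product measure there; as `e` is open with probability at least `r e`, one can open `e` in the
lower configuration with overall probability `r e`, but only when it is open in the upper one.
-/

open scoped Classical

open Finset

theorem card_le_card_add_one_of_injOn {α β : Type*} [Finite α] [Finite β] (f : α → β) (a : α)
    (hf : Set.InjOn f {a}ᶜ) : Nat.card α ≤ Nat.card β + 1 := by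
  have hinj := Set.ncard_le_ncard_of_injOn f (fun _ _ => Set.mem_univ _) hf
  have hsplit := Set.ncard_add_ncard_compl ({a} : Set α)
  rw [Set.ncard_univ] at hinj
  rw [Set.ncard_singleton] at hsplit
  omega

theorem card_quotient_eqvGen_le_add_one {α : Type*} [Finite α] {r r' : α → α → Prop} (u v : α)
    (hrr' : ∀ x y, r x y → r' x y)
    (hr' : ∀ x y, r' x y → r x y ∨ ((x = u ∨ x = v) ∧ (y = u ∨ y = v))) :
    Nat.card (Quotient (Relation.EqvGen.setoid r)) ≤
      Nat.card (Quotient (Relation.EqvGen.setoid r')) + 1 := by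
  let s := Relation.EqvGen.setoid r
  -- `merge` glues the classes of `u` and `v`, so it is constant on `r'`-classes; hence the
  -- natural map to the `r'`-classes is injective away from `⟦v⟧`.
  let merge (c : Quotient s) : Quotient s := if c = ⟦v⟧ then ⟦u⟧ else c
  have hmerge : ∀ x y, Relation.EqvGen r' x y → merge ⟦x⟧ = merge ⟦y⟧ := by
    intro x y h
    induction h with
    | rel x y hxy =>
      rcases hr' x y hxy with h | ⟨hx | hx, hy | hy⟩
      · rw [Quotient.sound (Relation.EqvGen.rel _ _ h)]
      all_goals subst hx hy; simp [merge]
    | refl => rfl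
    | symm _ _ _ ih => exact ih.symm
    | trans _ _ _ _ _ ih₁ ih₂ => exact ih₁.trans ih₂
  refine card_le_card_add_one_of_injOn
    (Quotient.map' id fun _ _ => Relation.EqvGen.mono hrr' _ _) ⟦v⟧ ?_
  intro c (hc : c ≠ ⟦v⟧) d (hd : d ≠ ⟦v⟧) hcd
  induction c using Quotient.ind
  induction d using Quotient.ind
  have := hmerge _ _ (Quotient.exact hcd)
  simp only [merge, id] at this
  rwa [if_neg hc, if_neg hd] at this

theorem kappa_le_kappa_insert_add_one {V : Type*} [Fintype V] [DecidableEq V]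
    (S : Finset (Finset V)) (u v : V) : kappa S ≤ kappa (insert {u, v} S) + 1 :=
  card_quotient_eqvGen_le_add_one u v
    (fun _ _ ⟨f, hf, hx, hy⟩ => ⟨f, mem_insert_of_mem hf, hx, hy⟩)
    fun x y ⟨f, hf, hx, hy⟩ => by
      rcases mem_insert.1 hf with rfl | hf
      · simp only [mem_insert, mem_singleton] at hx hy
        exact Or.inr ⟨hx, hy⟩
      · exact Or.inl ⟨f, hf, hx, hy⟩

theorem pow_kappa_le_mul_pow_kappa_insert {V : Type*} [Fintype V] [DecidableEq V] {q : ℝ}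
    (hq : 1 ≤ q) (S : Finset (Finset V)) {e : Finset V} (he : e.card = 2) :
    q ^ kappa S ≤ q * q ^ kappa (insert e S) := by
  obtain ⟨u, v, -, rfl⟩ := card_eq_two.1 he
  rw [← pow_succ']
  exact pow_le_pow_right₀ hq (kappa_le_kappa_insert_add_one S u v)

section Coupling

variable {ι : Type*} [DecidableEq ι]

noncomputable def bernoulliWeight (E : Finset ι) (r : ι → ℝ) (A : Finset ι) : ℝ :=
  (∏ e ∈ A, r e) * ∏ e ∈ E \ A, (1 - r e)

theorem bernoulliWeight_nonneg {E A : Finset ι} {r : ι → ℝ} (hr : ∀ e ∈ E, 0 ≤ r e ∧ r e ≤ 1)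
    (hA : A ⊆ E) : 0 ≤ bernoulliWeight E r A :=
  mul_nonneg (prod_nonneg fun e he => (hr e (hA he)).1)
    (prod_nonneg fun e he => sub_nonneg.2 (hr e (mem_sdiff.1 he).1).2)

theorem sum_bernoulliWeight (E : Finset ι) (r : ι → ℝ) :
    ∑ A ∈ E.powerset, bernoulliWeight E r A = 1 := by
  simp [bernoulliWeight, ← prod_add]

theorem one_le_sum_mul_bernoulliWeight {E : Finset ι} {r : ι → ℝ}
    (hr : ∀ e ∈ E, 0 ≤ r e ∧ r e ≤ 1) {f : Finset ι → ℝ} (hf : ∀ A ⊆ E, 1 ≤ f A) :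
    1 ≤ ∑ A ∈ E.powerset, f A * bernoulliWeight E r A := calc
  1 = ∑ A ∈ E.powerset, bernoulliWeight E r A := (sum_bernoulliWeight E r).symm
  _ ≤ _ := sum_le_sum fun A hA => le_mul_of_one_le_left
    (bernoulliWeight_nonneg hr (mem_powerset.1 hA)) (hf A (mem_powerset.1 hA))

theorem bernoulliWeight_insert_insert {E A : Finset ι} {r : ι → ℝ} {e : ι} (he : e ∉ E)
    (hA : e ∉ A) : bernoulliWeight (insert e E) r (insert e A) = r e * bernoulliWeight E r A := by
  rw [bernoulliWeight, bernoulliWeight, prod_insert hA, insert_sdiff_insert,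
    sdiff_insert_of_notMem he, mul_assoc]

theorem bernoulliWeight_insert_of_notMem {E A : Finset ι} {r : ι → ℝ} {e : ι} (he : e ∉ E)
    (hA : e ∉ A) : bernoulliWeight (insert e E) r A = (1 - r e) * bernoulliWeight E r A := by
  rw [bernoulliWeight, bernoulliWeight, insert_sdiff_of_notMem _ hA,
    prod_insert fun h => he (mem_sdiff.1 h).1]
  ring

/-- `ν (e ∈ A | A \ {e} = S) ≥ r e` for every edge `e` and every configuration `S` of the other
edges, with the denominator cleared. -/
def CondProbAtLeast (E : Finset ι) (r : ι → ℝ) (ν : Finset ι → ℝ) : Prop :=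
  ∀ e ∈ E, ∀ S ⊆ E, e ∉ S → r e * (ν S + ν (insert e S)) ≤ ν (insert e S)

theorem CondProbAtLeast.of_insert {E : Finset ι} {e : ι} {r : ι → ℝ} {ν : Finset ι → ℝ}
    (h : CondProbAtLeast (insert e E) r ν) (he : e ∉ E) :
    CondProbAtLeast E r ν ∧ CondProbAtLeast E r fun S => ν (insert e S) := by
  refine ⟨fun f hf S hS hfS => h f (mem_insert_of_mem hf) S (hS.trans (subset_insert _ _)) hfS,
    fun f hf S hS hfS => ?_⟩
  have hfe : f ≠ e := fun hfe => he (hfe ▸ hf)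
  have := h f (mem_insert_of_mem hf) (insert e S) (insert_subset_insert e hS) (by simp [hfe, hfS])
  rwa [insert_comm f e S] at this

theorem CondProbAtLeast.mul_sum_le {E : Finset ι} {e : ι} {r : ι → ℝ} {ν : Finset ι → ℝ}
    (h : CondProbAtLeast (insert e E) r ν) (he : e ∉ E) :
    r e * ∑ S ∈ (insert e E).powerset, ν S ≤ ∑ S ∈ E.powerset, ν (insert e S) := by
  rw [sum_powerset_insert he, ← sum_add_distrib, mul_sum]
  exact sum_le_sum fun S hS => h e (mem_insert_self e E) S
    ((mem_powerset.1 hS).trans (subset_insert _ _)) fun heS => he (mem_powerset.1 hS heS)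

theorem condProbAtLeast_of_le_mul {E : Finset ι} {p : ι → ℝ} (hp : ∀ e ∈ E, 0 ≤ p e ∧ p e ≤ 1)
    {q : ℝ} (hq : 1 ≤ q) {f : Finset ι → ℝ} (hf₀ : ∀ S ⊆ E, 0 ≤ f S)
    (hf : ∀ e ∈ E, ∀ S ⊆ E, e ∉ S → f S ≤ q * f (insert e S)) :
    CondProbAtLeast E (fun e => p e / q) fun A => f A * bernoulliWeight E p A := by
  intro e he S hS heS
  have hS' : S ⊆ E.erase e := subset_erase.2 ⟨hS, heS⟩
  set c := bernoulliWeight (E.erase e) p S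
  have hc : 0 ≤ c := bernoulliWeight_nonneg (fun x hx => hp x (mem_of_mem_erase hx)) hS'
  have hclosed := bernoulliWeight_insert_of_notMem (notMem_erase e E) heS (r := p)
  have hopen := bernoulliWeight_insert_insert (notMem_erase e E) heS (r := p)
  rw [insert_erase he] at hclosed hopen
  obtain ⟨hpe₀, hpe₁⟩ := hp e he
  have hf' := hf₀ _ (insert_subset he hS)
  have h₁ : p e * (1 - p e) * c * f S ≤ p e * (1 - p e) * c * (q * f (insert e S)) :=
    mul_le_mul_of_nonneg_left (hf e he S hS heS) (by positivity)
  have h₂ : p e ^ 2 * c * f (insert e S) ≤ q * (p e ^ 2 * c * f (insert e S)) :=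
    le_mul_of_one_le_left (by positivity) hq
  simp only [hclosed, hopen]
  rw [div_mul_eq_mul_div, div_le_iff₀ (by linarith)]
  linarith

structure IsMonotoneCoupling (E : Finset ι) (α β : Finset ι → ℝ)
    (μ : Finset ι → Finset ι → ℝ) : Prop where
  nonneg : ∀ A B, 0 ≤ μ A B
  subset_of_ne_zero : ∀ A B, μ A B ≠ 0 → A ⊆ B ∧ B ⊆ E
  fst_marginal : ∀ A ⊆ E, ∑ B ∈ E.powerset, μ A B = α A
  snd_marginal : ∀ B ⊆ E, ∑ A ∈ E.powerset, μ A B = β B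

theorem IsMonotoneCoupling.empty (r : ι → ℝ) {ν : Finset ι → ℝ} (hν : 0 ≤ ν ∅) :
    IsMonotoneCoupling ∅ (fun A => (∑ S ∈ (∅ : Finset ι).powerset, ν S) * bernoulliWeight ∅ r A)
      ν fun A B => if A = ∅ ∧ B = ∅ then ν ∅ else 0 where
  nonneg A B := by split_ifs <;> first | exact hν | exact le_rfl
  subset_of_ne_zero A B h := by
    split_ifs at h with hAB
    · simp [hAB.1, hAB.2]
    · exact absurd rfl h
  fst_marginal A hA := by simp [subset_empty.1 hA, bernoulliWeight]
  snd_marginal B hB := by simp [subset_empty.1 hB]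

/-- `μ₀`, `μ₁` couple the configurations off `e`, given that `e` is closed resp. open in the upper
configuration; `e` is opened in the lower one with probability `a` when it is open above. -/
def insertCoupling (e : ι) (a : ℝ) (μ₀ μ₁ : Finset ι → Finset ι → ℝ) (A B : Finset ι) : ℝ :=
  if e ∈ B then
    if e ∈ A then a * μ₁ (A.erase e) (B.erase e) else (1 - a) * μ₁ A (B.erase e)
  else if e ∈ A then 0 else μ₀ A B

section insertCoupling

variable {e : ι} {a : ℝ} {μ₀ μ₁ : Finset ι → Finset ι → ℝ} {A B : Finset ι}

theorem insertCoupling_of_notMem (hA : e ∉ A) (hB : e ∉ B) :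
    insertCoupling e a μ₀ μ₁ A B = μ₀ A B := by
  simp [insertCoupling, hA, hB]

theorem insertCoupling_insert_left (hB : e ∉ B) :
    insertCoupling e a μ₀ μ₁ (insert e A) B = 0 := by
  simp [insertCoupling, hB]

theorem insertCoupling_insert_right (hA : e ∉ A) (hB : e ∉ B) :
    insertCoupling e a μ₀ μ₁ A (insert e B) = (1 - a) * μ₁ A B := by
  simp [insertCoupling, hA, hB]

theorem insertCoupling_insert_insert (hA : e ∉ A) (hB : e ∉ B) :
    insertCoupling e a μ₀ μ₁ (insert e A) (insert e B) = a * μ₁ A B := by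
  simp [insertCoupling, hA, hB]

end insertCoupling

theorem sum_powerset_insert_eq_sum_add {β : Type*} [AddCommMonoid β] {E : Finset ι} {e : ι}
    (he : e ∉ E) (f : Finset ι → β) :
    ∑ A ∈ (insert e E).powerset, f A = ∑ A ∈ E.powerset, (f A + f (insert e A)) := by
  rw [sum_powerset_insert he, sum_add_distrib]

theorem forall_subset_insert_of_forall_subset {E : Finset ι} {e : ι} {P : Finset ι → Prop}
    (h : ∀ A ⊆ E, P A ∧ P (insert e A)) : ∀ A ⊆ insert e E, P A := by
  intro A hA
  by_cases heA : e ∈ A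
  · simpa [insert_erase heA] using (h (A.erase e) (subset_insert_iff.1 hA)).2
  · exact (h A ((subset_insert_iff_of_notMem heA).1 hA)).1

theorem IsMonotoneCoupling.insert {E : Finset ι} {e : ι} (he : e ∉ E) {a : ℝ} (ha₀ : 0 ≤ a)
    (ha₁ : a ≤ 1) {α₀ α₁ β₀ β₁ α β : Finset ι → ℝ} {μ₀ μ₁ : Finset ι → Finset ι → ℝ}
    (h₀ : IsMonotoneCoupling E α₀ β₀ μ₀) (h₁ : IsMonotoneCoupling E α₁ β₁ μ₁)
    (hα : ∀ A ⊆ E, α A = α₀ A + (1 - a) * α₁ A ∧ α (insert e A) = a * α₁ A)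
    (hβ : ∀ B ⊆ E, β B = β₀ B ∧ β (insert e B) = β₁ B) :
    IsMonotoneCoupling (insert e E) α β (insertCoupling e a μ₀ μ₁) where
  nonneg A B := by
    unfold insertCoupling
    split_ifs
    · exact mul_nonneg ha₀ (h₁.nonneg _ _)
    · exact mul_nonneg (sub_nonneg.2 ha₁) (h₁.nonneg _ _)
    · exact le_rfl
    · exact h₀.nonneg _ _
  subset_of_ne_zero A B h := by
    unfold insertCoupling at h
    split_ifs at h with hB hA hA
    · obtain ⟨hAB, hBE⟩ := h₁.subset_of_ne_zero _ _ (right_ne_zero_of_mul h)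
      refine ⟨?_, subset_insert_iff.2 hBE⟩
      rw [← insert_erase hB]
      exact subset_insert_iff.2 hAB
    · obtain ⟨hAB, hBE⟩ := h₁.subset_of_ne_zero _ _ (right_ne_zero_of_mul h)
      exact ⟨hAB.trans (erase_subset e B), subset_insert_iff.2 hBE⟩
    · exact absurd rfl h
    · obtain ⟨hAB, hBE⟩ := h₀.subset_of_ne_zero _ _ h
      exact ⟨hAB, hBE.trans (subset_insert e E)⟩
  fst_marginal := forall_subset_insert_of_forall_subset fun A hA => by
    have heA : e ∉ A := fun h => he (hA h)
    have heB : ∀ B ∈ E.powerset, e ∉ B := fun B hB h => he (mem_powerset.1 hB h)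
    rw [sum_powerset_insert_eq_sum_add he, sum_powerset_insert_eq_sum_add he, (hα A hA).1,
      (hα A hA).2, ← h₀.fst_marginal A hA, ← h₁.fst_marginal A hA, mul_sum, mul_sum,
      ← sum_add_distrib]
    refine ⟨sum_congr rfl fun B hB => ?_, sum_congr rfl fun B hB => ?_⟩
    · rw [insertCoupling_of_notMem heA (heB B hB), insertCoupling_insert_right heA (heB B hB)]
    · rw [insertCoupling_insert_left (heB B hB), insertCoupling_insert_insert heA (heB B hB),
        zero_add]
  snd_marginal := forall_subset_insert_of_forall_subset fun B hB => by
    have heB : e ∉ B := fun h => he (hB h)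
    have heA : ∀ A ∈ E.powerset, e ∉ A := fun A hA h => he (mem_powerset.1 hA h)
    rw [sum_powerset_insert_eq_sum_add he, sum_powerset_insert_eq_sum_add he, (hβ B hB).1,
      (hβ B hB).2, ← h₀.snd_marginal B hB, ← h₁.snd_marginal B hB]
    refine ⟨sum_congr rfl fun A hA => ?_, ?_⟩
    · rw [insertCoupling_of_notMem (heA A hA) heB, insertCoupling_insert_left heB, add_zero]
    · refine sum_congr rfl fun A hA => ?_
      rw [insertCoupling_insert_right (heA A hA) heB,
        insertCoupling_insert_insert (heA A hA) heB]
      ring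

theorem exists_isMonotoneCoupling_bernoulliWeight (E : Finset ι) {r : ι → ℝ}
    (hr : ∀ e ∈ E, 0 ≤ r e) {ν : Finset ι → ℝ} (hν : ∀ S ⊆ E, 0 ≤ ν S)
    (hcond : CondProbAtLeast E r ν) :
    ∃ μ, IsMonotoneCoupling E (fun A => (∑ S ∈ E.powerset, ν S) * bernoulliWeight E r A) ν μ := by
  induction E using Finset.induction_on generalizing ν with
  | empty => exact ⟨_, IsMonotoneCoupling.empty r (hν ∅ subset_rfl)⟩
  | insert e E he ih =>
    set t₀ := ∑ S ∈ E.powerset, ν S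
    set t₁ := ∑ S ∈ E.powerset, ν (insert e S)
    have hT : ∑ S ∈ (insert e E).powerset, ν S = t₀ + t₁ := sum_powerset_insert he ν
    have hr' : ∀ f ∈ E, 0 ≤ r f := fun f hf => hr f (mem_insert_of_mem hf)
    obtain ⟨hcond₀, hcond₁⟩ := hcond.of_insert he
    obtain ⟨μ₀, h₀⟩ := ih hr' (fun S hS => hν S (hS.trans (subset_insert e E))) hcond₀
    obtain ⟨μ₁, h₁⟩ := ih hr' (fun S hS => hν _ (insert_subset_insert e hS)) hcond₁
    have ht₁ : 0 ≤ t₁ := sum_nonneg fun S hS => hν _ (insert_subset_insert e (mem_powerset.1 hS))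
    have hrT : 0 ≤ r e * (t₀ + t₁) := mul_nonneg (hr e (mem_insert_self e E))
      (hT ▸ sum_nonneg fun S hS => hν S (mem_powerset.1 hS))
    have hrT_le : r e * (t₀ + t₁) ≤ t₁ := hT ▸ hcond.mul_sum_le he
    -- chosen so that `e` is open below with total probability `a * t₁ / (t₀ + t₁) = r e`
    set a := r e * (t₀ + t₁) / t₁
    have ha : a * t₁ = r e * (t₀ + t₁) := div_mul_cancel_of_imp fun h => by linarith
    refine ⟨_, h₀.insert he (div_nonneg hrT ht₁) (div_le_one_of_le₀ hrT_le ht₁) h₁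
      (fun A hA => ⟨?_, ?_⟩) fun B _ => ⟨rfl, rfl⟩⟩
    · have heA : e ∉ A := fun h => he (hA h)
      rw [hT, bernoulliWeight_insert_of_notMem he heA]
      linear_combination (bernoulliWeight E r A) * ha
    · have heA : e ∉ A := fun h => he (hA h)
      rw [hT, bernoulliWeight_insert_insert he heA]
      linear_combination -(bernoulliWeight E r A) * ha

end Coupling

/-- Stochastic domination: the Erdős–Rényi distribution `ER(G;p/q)` is
dominated by the random cluster distribution `RC(G;q,p)` for `q ≥ 1`: there is
a coupling `μ` with first marginal `ER(G;p/q)`, second marginal `RC(G;q,p)`,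
supported on pairs `A ⊆ A'`. -/
theorem er_dominated_by_rc {V : Type*} [Fintype V] [DecidableEq V]
    (E : Finset (Finset V)) (hE : ∀ e ∈ E, e.card = 2)
    (p : Finset V → ℝ) (hp : ∀ e ∈ E, 0 ≤ p e ∧ p e ≤ 1) (q : ℝ) (hq : 1 ≤ q) :
    let w : Finset (Finset V) → ℝ := fun A =>
      q ^ kappa A * (∏ e ∈ A, p e) * ∏ e ∈ E \ A, (1 - p e)
    let Z : ℝ := ∑ A ∈ E.powerset, w A
    let er : Finset (Finset V) → ℝ := fun A =>
      (∏ e ∈ A, (p e / q)) * ∏ e ∈ E \ A, (1 - p e / q)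
    ∃ μ : Finset (Finset V) → Finset (Finset V) → ℝ,
      (∀ A B, 0 ≤ μ A B) ∧
      (∀ A B, μ A B ≠ 0 → A ∈ E.powerset ∧ B ∈ E.powerset ∧ A ⊆ B) ∧
      (∀ A ∈ E.powerset, ∑ B ∈ E.powerset, μ A B = er A) ∧
      (∀ B ∈ E.powerset, ∑ A ∈ E.powerset, μ A B = w B / Z) := by
  intro w Z er
  have hq₀ : 0 < q := one_pos.trans_le hq
  have hw : ∀ A, w A = q ^ kappa A * bernoulliWeight E p A := fun A => mul_assoc _ _ _
  have hZ : 1 ≤ Z := by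
    simpa only [Z, hw] using one_le_sum_mul_bernoulliWeight hp fun A _ => one_le_pow₀ hq
  have hν : ∀ S ⊆ E, 0 ≤ w S / Z := fun S hS => by
    rw [hw]
    have := bernoulliWeight_nonneg hp hS
    positivity
  have hcond : CondProbAtLeast E (fun e => p e / q) fun B => w B / Z := by
    convert condProbAtLeast_of_le_mul hp hq (f := fun A => q ^ kappa A / Z)
      (fun S _ => by positivity) fun e he S _ _ => ?_ using 2 with A
    · rw [hw]
      ring
    rw [← mul_div_assoc]
    exact div_le_div_of_nonneg_right (pow_kappa_le_mul_pow_kappa_insert hq S (hE e he))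
      (by positivity)
  obtain ⟨μ, hμ⟩ := exists_isMonotoneCoupling_bernoulliWeight E
    (fun e he => div_nonneg (hp e he).1 hq₀.le) hν hcond
  have hmass : ∑ B ∈ E.powerset, w B / Z = 1 := by rw [← sum_div, div_self (by positivity)]
  refine ⟨μ, hμ.nonneg, fun A B h => ?_, fun A hA => ?_,
    fun B hB => hμ.snd_marginal B (mem_powerset.1 hB)⟩
  · obtain ⟨hAB, hB⟩ := hμ.subset_of_ne_zero A B h
    exact ⟨mem_powerset.2 (hAB.trans hB), mem_powerset.2 hB, hAB⟩
  · rw [hμ.fst_marginal A (mem_powerset.1 hA), hmass, one_mul]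
    rfl
end
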